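/- Let γ: ℝ → ℝ be continuous with compact support, and suppose there exist s₁ < s₂ < s₃ < s₄ such that γ = 0 outside (s₁,s₂) ∪ (s₃,s₄), γ < 0 on (s₁,s₂), γ > 0 on (s₃,s₄). Let φ ∈ H¹(ℝ) with φ = 1 on [s₁,s₂] and φ = 0 on [s₃,s₄], and Φ(s,u) = √(2/d) φ(s) sin(πu/(2d)). Then q[Φ] = ‖φ'‖²_{L²(ℝ)} + (1/d)∫_{s₁}^{s₂} γ(s) ds, which is negative for all sufficiently small d > 0. -/

import Mathlib

/-!
Wherever `γ ≠ 0` the function `φ` is locally constant, so `φ' γ = 0`. Hence the weight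
`1 / (1 - uγ)` in front of `|∂ₛΦ|²` can be replaced by `1`, and every `u`-integral reduces to
`∫₀^d sin²(πu/2d) (1 - ug) du = d/2 - g (d²/4 + d²/π²)` or its cosine analogue. The transverse
kinetic energy `π²/(4d²) ‖φ‖²` then cancels against the subtracted term, leaving
`‖φ'‖² + (1/d) ∫ φ² γ`, and `φ² γ = γ 𝟙_[s₁,s₂]`. Since `∫_{s₁}^{s₂} γ < 0`, the `1/d` term wins
for small `d`.
-/

open Real Set MeasureTheory intervalIntegral

theorem deriv_const_mul_sin_mul_div (a b c u : ℝ) :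
    deriv (fun u' => a * sin (b * u' / c)) u = a * (b / c * cos (b * u / c)) := by
  have h : HasDerivAt (fun u' => b * u' / c) (b / c) u := by
    simpa using ((hasDerivAt_id u).const_mul b).div_const c
  rw [((h.sin).const_mul a).deriv]
  ring

section TransverseIntegrals

variable {d : ℝ}

theorem integral_sin_sq_mul_one_sub (hd : d ≠ 0) (g : ℝ) :
    ∫ u in (0:ℝ)..d, sin (π * u / (2 * d)) ^ 2 * (1 - u * g)
      = d / 2 - g * (d ^ 2 / 4 + d ^ 2 / π ^ 2) := by
  have hπ : π ≠ 0 := pi_ne_zero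
  have hlin : ∀ u, HasDerivAt (fun u : ℝ => π * u / d) (π / d) u := fun u => by
    simpa using ((hasDerivAt_id u).const_mul π).div_const d
  have hF : ∀ u, HasDerivAt (fun u : ℝ => u / 2 - d / (2 * π) * sin (π * u / d)
        - g * (u ^ 2 / 4 - d / (2 * π) * (u * sin (π * u / d))
          - d ^ 2 / (2 * π ^ 2) * cos (π * u / d)))
      (sin (π * u / (2 * d)) ^ 2 * (1 - u * g)) u := by
    intro u
    have hs := (hlin u).sin
    have hc := (hlin u).cos
    have H := (((hasDerivAt_id u).div_const 2).sub (hs.const_mul (d / (2 * π)))).sub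
      (((((hasDerivAt_pow 2 u).div_const 4).sub
        (((hasDerivAt_id u).mul hs).const_mul (d / (2 * π)))).sub
        (hc.const_mul (d ^ 2 / (2 * π ^ 2)))).const_mul g)
    refine H.congr_deriv ?_
    have half : sin (π * u / (2 * d)) ^ 2 = 1 / 2 - cos (π * u / d) / 2 := by
      rw [sin_sq_eq_half_sub, show 2 * (π * u / (2 * d)) = π * u / d by field_simp]
    simp only [id, half]
    field_simp
    ring
  rw [integral_eq_sub_of_hasDerivAt (fun u _ => hF u)
    (Continuous.intervalIntegrable (by fun_prop) _ _)]
  simp only [mul_div_cancel_right₀ _ hd, mul_zero, zero_div, sin_pi, cos_pi, sin_zero, cos_zero]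
  field_simp
  ring

theorem integral_cos_sq_mul_one_sub (hd : d ≠ 0) (g : ℝ) :
    ∫ u in (0:ℝ)..d, cos (π * u / (2 * d)) ^ 2 * (1 - u * g)
      = d / 2 - g * (d ^ 2 / 4 - d ^ 2 / π ^ 2) := by
  simp only [cos_sq', sub_mul, one_mul]
  rw [intervalIntegral.integral_sub (Continuous.intervalIntegrable (by fun_prop) _ _)
    (Continuous.intervalIntegrable (by fun_prop) _ _), integral_sin_sq_mul_one_sub hd]
  simp only [intervalIntegral.integral_sub intervalIntegrable_const
    (intervalIntegrable_id.mul_const g), intervalIntegral.integral_const,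
    intervalIntegral.integral_mul_const, integral_id, smul_eq_mul]
  ring

theorem integral_trial_mass (hd : 0 < d) (p g : ℝ) :
    ∫ u in (0:ℝ)..d, (√(2 / d) * p * sin (π * u / (2 * d))) ^ 2 * (1 - u * g)
      = p ^ 2 - (d / 2 + 2 * d / π ^ 2) * (p ^ 2 * g) := by
  have hsq : √(2 / d) ^ 2 = 2 / d := sq_sqrt (by positivity)
  have hπ : π ≠ 0 := pi_ne_zero
  simp only [mul_pow, hsq, mul_assoc, intervalIntegral.integral_const_mul,
    integral_sin_sq_mul_one_sub hd.ne']
  field_simp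
  ring

theorem integral_trial_gradient (hd : 0 < d) {p p' g : ℝ} (hp'g : p' * g = 0) :
    ∫ u in (0:ℝ)..d, ((√(2 / d) * p' * sin (π * u / (2 * d))) ^ 2 / (1 - u * g)
        + (√(2 / d) * p * (π / (2 * d) * cos (π * u / (2 * d)))) ^ 2 * (1 - u * g))
      = p' ^ 2 + π ^ 2 / (4 * d ^ 2) * p ^ 2
        + (1 / (2 * d) - π ^ 2 / (8 * d)) * (p ^ 2 * g) := by
  have hsq : √(2 / d) ^ 2 = 2 / d := sq_sqrt (by positivity)
  have hπ : π ≠ 0 := pi_ne_zero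
  -- `p' g = 0`, so the first weight `1 / (1 - u g)` may be replaced by `1 - u * 0`
  have hweight : ∀ u, (√(2 / d) * p' * sin (π * u / (2 * d))) ^ 2 / (1 - u * g)
      = (√(2 / d) * p') ^ 2 * (sin (π * u / (2 * d)) ^ 2 * (1 - u * 0)) := by
    rcases mul_eq_zero.1 hp'g with h | h <;> simp [h, mul_pow]
  simp only [hweight]
  rw [intervalIntegral.integral_add (Continuous.intervalIntegrable (by fun_prop) _ _)
    (Continuous.intervalIntegrable (by fun_prop) _ _)]
  simp only [mul_pow, hsq, mul_assoc, intervalIntegral.integral_const_mul,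
    integral_sin_sq_mul_one_sub hd.ne', integral_cos_sq_mul_one_sub hd.ne']
  field_simp
  ring

end TransverseIntegrals

/-- The quadratic form `q[Φ]` of the trial function `Φ(s,u) = √(2/d) φ(s) sin(πu/(2d))`. -/
noncomputable def trialQuadraticForm (γ φ : ℝ → ℝ) (d : ℝ) : ℝ :=
  (∫ s, ∫ u in (0:ℝ)..d,
      ((deriv (fun s' => √(2 / d) * φ s' * sin (π * u / (2 * d))) s) ^ 2 / (1 - u * γ s)
        + (deriv (fun u' => √(2 / d) * φ s * sin (π * u' / (2 * d))) u) ^ 2 * (1 - u * γ s)))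
    - (π ^ 2 / (4 * d ^ 2)) * ∫ s, ∫ u in (0:ℝ)..d,
        (√(2 / d) * φ s * sin (π * u / (2 * d))) ^ 2 * (1 - u * γ s)

theorem trialQuadraticForm_eq {γ φ : ℝ → ℝ} (hφ : Integrable fun s => φ s ^ 2)
    (hφ' : Integrable fun s => deriv φ s ^ 2) (hφγ : Integrable fun s => φ s ^ 2 * γ s)
    (hφ'γ : ∀ s, deriv φ s * γ s = 0) {d : ℝ} (hd : 0 < d) :
    trialQuadraticForm γ φ d = (∫ s, deriv φ s ^ 2) + 1 / d * ∫ s, φ s ^ 2 * γ s := by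
  have hgrad := fun s => integral_trial_gradient hd (p := φ s) (hφ'γ s)
  simp only [trialQuadraticForm, deriv_mul_const_field', deriv_const_mul_field',
    deriv_const_mul_sin_mul_div, hgrad, integral_trial_mass hd]
  have hkin : Integrable fun s => deriv φ s ^ 2 + π ^ 2 / (4 * d ^ 2) * φ s ^ 2 :=
    hφ'.add (hφ.const_mul _)
  rw [integral_add hkin (hφγ.const_mul _), integral_add hφ' (hφ.const_mul _),
    integral_sub hφ (hφγ.const_mul _), MeasureTheory.integral_const_mul,
    MeasureTheory.integral_const_mul, MeasureTheory.integral_const_mul]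
  have hπ : π ≠ 0 := pi_ne_zero
  field_simp
  ring

theorem deriv_eq_zero_of_eqOn_const {f : ℝ → ℝ} {U : Set ℝ} {c : ℝ} (hU : IsOpen U)
    (hf : EqOn f (fun _ => c) U) {x : ℝ} (hx : x ∈ U) : deriv f x = 0 :=
  (Filter.eventuallyEq_of_mem (hU.mem_nhds hx) hf).deriv_eq.trans (deriv_const x c)

section BendingProfile

variable {s₁ s₂ s₃ s₄ : ℝ} {γ φ : ℝ → ℝ}

theorem deriv_mul_eq_zero_of_const_on_support (hγ0 : ∀ s, s ∉ Ioo s₁ s₂ ∪ Ioo s₃ s₄ → γ s = 0)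
    (hφ1 : ∀ s ∈ Icc s₁ s₂, φ s = 1) (hφ0 : ∀ s ∈ Icc s₃ s₄, φ s = 0) (s : ℝ) :
    deriv φ s * γ s = 0 := by
  by_cases hs : s ∈ Ioo s₁ s₂ ∪ Ioo s₃ s₄
  · rcases hs with hs | hs
    · rw [deriv_eq_zero_of_eqOn_const isOpen_Ioo
        (fun x hx => hφ1 x (Ioo_subset_Icc_self hx)) hs, zero_mul]
    · rw [deriv_eq_zero_of_eqOn_const isOpen_Ioo
        (fun x hx => hφ0 x (Ioo_subset_Icc_self hx)) hs, zero_mul]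
  · rw [hγ0 s hs, mul_zero]

theorem sq_mul_eq_indicator (hγ0 : ∀ s, s ∉ Ioo s₁ s₂ ∪ Ioo s₃ s₄ → γ s = 0)
    (hφ1 : ∀ s ∈ Icc s₁ s₂, φ s = 1) (hφ0 : ∀ s ∈ Icc s₃ s₄, φ s = 0) :
    (fun s => φ s ^ 2 * γ s) = (Icc s₁ s₂).indicator γ := by
  funext s
  by_cases h₁ : s ∈ Icc s₁ s₂
  · rw [indicator_of_mem h₁, hφ1 s h₁, one_pow, one_mul]
  rw [indicator_of_notMem h₁]
  by_cases h₂ : s ∈ Ioo s₃ s₄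
  · rw [hφ0 s (Ioo_subset_Icc_self h₂), zero_pow two_ne_zero, zero_mul]
  · rw [hγ0 s (fun h => h.elim (fun h => h₁ (Ioo_subset_Icc_self h)) h₂), mul_zero]

theorem integrable_sq_mul (hγc : Continuous γ)
    (hγ0 : ∀ s, s ∉ Ioo s₁ s₂ ∪ Ioo s₃ s₄ → γ s = 0)
    (hφ1 : ∀ s ∈ Icc s₁ s₂, φ s = 1) (hφ0 : ∀ s ∈ Icc s₃ s₄, φ s = 0) :
    Integrable fun s => φ s ^ 2 * γ s := by
  rw [sq_mul_eq_indicator hγ0 hφ1 hφ0]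
  exact (integrable_indicator_iff measurableSet_Icc).2 hγc.integrableOn_Icc

theorem integral_sq_mul_eq_intervalIntegral (h12 : s₁ ≤ s₂)
    (hγ0 : ∀ s, s ∉ Ioo s₁ s₂ ∪ Ioo s₃ s₄ → γ s = 0)
    (hφ1 : ∀ s ∈ Icc s₁ s₂, φ s = 1) (hφ0 : ∀ s ∈ Icc s₃ s₄, φ s = 0) :
    ∫ s, φ s ^ 2 * γ s = ∫ s in s₁..s₂, γ s := by
  rw [sq_mul_eq_indicator hγ0 hφ1 hφ0, MeasureTheory.integral_indicator measurableSet_Icc,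
    integral_Icc_eq_integral_Ioc, integral_of_le h12]

end BendingProfile

theorem exists_pos_forall_add_one_div_mul_neg {A C : ℝ} (hA : 0 ≤ A) (hC : C < 0) :
    ∃ d₀ > 0, ∀ d : ℝ, 0 < d → d < d₀ → A + 1 / d * C < 0 := by
  refine ⟨-C / (A + 1), div_pos (neg_pos.2 hC) (by linarith), fun d hd hdd => ?_⟩
  rw [lt_div_iff₀ (by linarith)] at hdd
  calc A + 1 / d * C = (A * d + C) / d := by field_simp
    _ < 0 := div_neg_of_neg_of_pos (by nlinarith) hd

theorem stmt17_general (s₁ s₂ s₃ s₄ : ℝ) (h12 : s₁ < s₂)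
    (γ : ℝ → ℝ) (hγc : Continuous γ)
    (hγ0 : ∀ s, s ∉ Ioo s₁ s₂ ∪ Ioo s₃ s₄ → γ s = 0)
    (hγneg : ∀ s ∈ Ioo s₁ s₂, γ s < 0)
    (φ : ℝ → ℝ)
    (hφL2 : Integrable (fun s => (φ s) ^ 2))
    (hφ'L2 : Integrable (fun s => (deriv φ s) ^ 2))
    (hφ1 : ∀ s ∈ Icc s₁ s₂, φ s = 1) (hφ0 : ∀ s ∈ Icc s₃ s₄, φ s = 0)
    (Q : ℝ → ℝ)
    (hQ : ∀ d : ℝ, 0 < d → (∀ s u, u ∈ Icc (0:ℝ) d → 0 < 1 - u * γ s) →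
      Q d = (∫ s, ∫ u in (0:ℝ)..d,
          ((deriv (fun s' => Real.sqrt (2 / d) * φ s' * Real.sin (π * u / (2 * d))) s) ^ 2
              / (1 - u * γ s)
            + (deriv (fun u' => Real.sqrt (2 / d) * φ s * Real.sin (π * u' / (2 * d))) u) ^ 2
              * (1 - u * γ s)))
        - (π ^ 2 / (4 * d ^ 2)) * ∫ s, ∫ u in (0:ℝ)..d,
            (Real.sqrt (2 / d) * φ s * Real.sin (π * u / (2 * d))) ^ 2 * (1 - u * γ s)) :
    (∀ d : ℝ, 0 < d → (∀ s u, u ∈ Icc (0:ℝ) d → 0 < 1 - u * γ s) →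
      Q d = (∫ s, (deriv φ s) ^ 2) + (1 / d) * ∫ s in s₁..s₂, γ s) ∧
    ∃ d₀ > 0, ∀ d : ℝ, 0 < d → d < d₀ →
      (∀ s u, u ∈ Icc (0:ℝ) d → 0 < 1 - u * γ s) → Q d < 0 := by
  have hQ_eq : ∀ d : ℝ, 0 < d → (∀ s u, u ∈ Icc (0:ℝ) d → 0 < 1 - u * γ s) →
      Q d = (∫ s, (deriv φ s) ^ 2) + (1 / d) * ∫ s in s₁..s₂, γ s := fun d hd hw => by
    rw [hQ d hd hw, ← integral_sq_mul_eq_intervalIntegral h12.le hγ0 hφ1 hφ0]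
    exact trialQuadraticForm_eq hφL2 hφ'L2 (integrable_sq_mul hγc hγ0 hφ1 hφ0)
      (deriv_mul_eq_zero_of_const_on_support hγ0 hφ1 hφ0) hd
  have hγ_int_neg : ∫ s in s₁..s₂, γ s < 0 := by
    have h := intervalIntegral_pos_of_pos_on (f := fun s => -γ s) (hγc.neg.intervalIntegrable s₁ s₂)
      (fun s hs => neg_pos.2 (hγneg s hs)) h12
    rwa [intervalIntegral.integral_neg, neg_pos] at h
  obtain ⟨d₀, hd₀, hneg⟩ :=
    exists_pos_forall_add_one_div_mul_neg (integral_nonneg fun s => sq_nonneg _) hγ_int_neg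
  exact ⟨hQ_eq, d₀, hd₀, fun d hd hdd hw => (hQ_eq d hd hw).symm ▸ hneg d hd hdd⟩

/-- Positivity of the total bending angle does not preclude a bound state: if `γ < 0` on
`(s₁,s₂)`, `γ > 0` on `(s₃,s₄)`, `γ = 0` elsewhere, and `φ ∈ H¹(ℝ)` equals `1` on
`[s₁,s₂]` and `0` on `[s₃,s₄]`, then the trial function `Φ(s,u)=√(2/d) φ(s) sin(πu/(2d))`
gives `q[Φ] = ‖φ'‖² + (1/d)∫_{s₁}^{s₂} γ`, which is negative for small `d > 0`. -/
theorem stmt17 (s₁ s₂ s₃ s₄ : ℝ) (h12 : s₁ < s₂) (h23 : s₂ < s₃) (h34 : s₃ < s₄)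
    (γ : ℝ → ℝ) (hγc : Continuous γ) (hγsupp : HasCompactSupport γ)
    (hγ0 : ∀ s, s ∉ Ioo s₁ s₂ ∪ Ioo s₃ s₄ → γ s = 0)
    (hγneg : ∀ s ∈ Ioo s₁ s₂, γ s < 0) (hγpos : ∀ s ∈ Ioo s₃ s₄, 0 < γ s)
    (φ : ℝ → ℝ) (hφ : ContDiff ℝ 1 φ)
    (hφL2 : Integrable (fun s => (φ s) ^ 2))
    (hφ'L2 : Integrable (fun s => (deriv φ s) ^ 2))
    (hφ1 : ∀ s ∈ Icc s₁ s₂, φ s = 1) (hφ0 : ∀ s ∈ Icc s₃ s₄, φ s = 0)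
    (Q : ℝ → ℝ)
    (hQ : ∀ d : ℝ, 0 < d → (∀ s u, u ∈ Icc (0:ℝ) d → 0 < 1 - u * γ s) →
      Q d = (∫ s, ∫ u in (0:ℝ)..d,
          ((deriv (fun s' => Real.sqrt (2 / d) * φ s' * Real.sin (π * u / (2 * d))) s) ^ 2
              / (1 - u * γ s)
            + (deriv (fun u' => Real.sqrt (2 / d) * φ s * Real.sin (π * u' / (2 * d))) u) ^ 2
              * (1 - u * γ s)))
        - (π ^ 2 / (4 * d ^ 2)) * ∫ s, ∫ u in (0:ℝ)..d,
            (Real.sqrt (2 / d) * φ s * Real.sin (π * u / (2 * d))) ^ 2 * (1 - u * γ s)) :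
    (∀ d : ℝ, 0 < d → (∀ s u, u ∈ Icc (0:ℝ) d → 0 < 1 - u * γ s) →
      Q d = (∫ s, (deriv φ s) ^ 2) + (1 / d) * ∫ s in s₁..s₂, γ s) ∧
    ∃ d₀ > 0, ∀ d : ℝ, 0 < d → d < d₀ →
      (∀ s u, u ∈ Icc (0:ℝ) d → 0 < 1 - u * γ s) → Q d < 0 :=
  stmt17_general s₁ s₂ s₃ s₄ h12 γ hγc hγ0 hγneg φ hφL2 hφ'L2 hφ1 hφ0 Q hQ
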